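/- arXiv:2603.05967 — 3 statements merged into one kernel-verified Lean document; each statement's English description precedes it below -/
import Mathlib

section
/- For fixed x, y in Γ, as λ → 0+ we have λ^{|x|_μ} · K(x,y | λ) → K_{μ̄}(x,y), where K(x,y|λ) = G(x,y|λ)/G(e,y|λ) is the λ-Martin kernel and K_{μ̄}(x,y) = P^{|y|-|x|}(x,y)/P^{|y|}(e,y) if e, x, y are aligned on a word geodesic (i.e. |x^{-1}y|_μ = |y|_μ - |x|_μ) and 0 otherwise. -/
open Filter Topology
open scoped Classical

/-- n-fold convolution power of a measure `μ` on a group, with `μ^{*0} = δ_e`. -/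
noncomputable def convPow {G : Type*} [Group G] (μ : G → ℝ) : ℕ → G → ℝ
  | 0 => fun x => if x = 1 then 1 else 0
  | n + 1 => fun x => ∑ᶠ y, convPow μ n y * μ (y⁻¹ * x)

/-- The word semi-norm `|x|_μ = inf {n : μ^{*n}(x) > 0}`. -/
noncomputable def munorm {G : Type*} [Group G] (μ : G → ℝ) (x : G) : ℕ :=
  sInf {n | 0 < convPow μ n x}

/-- The λ-Green function `G(x,y|λ) = Σ_{n≥0} λ^n P^n(x,y)` with `P^n(x,y) = μ^{*n}(x⁻¹y)`. -/
noncomputable def lamGreen {G : Type*} [Group G] (μ : G → ℝ) (lam : ℝ) (x y : G) : ℝ :=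
  ∑' n : ℕ, lam ^ n * convPow μ n (x⁻¹ * y)

/-!
Since `P^n(x, y) = 0` for `n < |x⁻¹y|_μ`, the Green function factors as
`G(x, y | λ) = λ ^ |x⁻¹y|_μ · F(x⁻¹y, λ)`, where `F(g, ·)` is a power series with coefficients in
`[0, 1]` and constant term `P^{|g|_μ}(e, g) > 0`. The rescaled Martin kernel is therefore
`λ ^ (|x|_μ + |x⁻¹y|_μ - |y|_μ) · F(x⁻¹y, λ) / F(y, λ)`. The exponent is nonnegative by the
triangle inequality `|y|_μ ≤ |x|_μ + |x⁻¹y|_μ`, which follows from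
`P^m(e, w) P^n(w, z) ≤ P^{m+n}(e, z)`, so the limit is the ratio of the constant terms when the
exponent vanishes, i.e. when `e, x, y` lie on a geodesic, and `0` otherwise.
-/

open Function

section ConvPow

variable {G : Type*} [Group G] {μ : G → ℝ}

lemma convPow_zero_apply (x : G) : convPow μ 0 x = if x = 1 then 1 else 0 := rfl

lemma convPow_succ_apply (n : ℕ) (x : G) :
    convPow μ (n + 1) x = ∑ᶠ y, convPow μ n y * μ (y⁻¹ * x) := rfl

lemma finsum_comp_inv_mul (z : G) : ∑ᶠ y, μ (y⁻¹ * z) = ∑ᶠ y, μ y :=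
  finsum_comp_equiv ((Equiv.inv G).trans (Equiv.mulRight z))

lemma hasFiniteSupport_mul_comp_inv_mul (hfin : HasFiniteSupport μ) (f : G → ℝ) (z : G) :
    HasFiniteSupport fun y => f y * μ (y⁻¹ * z) :=
  HasFiniteSupport.fun_mul_right f
    (hfin.fun_comp_of_injective ((mul_left_injective z).comp inv_injective))

lemma convPow_nonneg (hnn : ∀ x, 0 ≤ μ x) (n : ℕ) (x : G) : 0 ≤ convPow μ n x := by
  induction n generalizing x with
  | zero => rw [convPow_zero_apply]; positivity
  | succ n ih => exact finsum_nonneg fun y => mul_nonneg (ih y) (hnn _)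

lemma convPow_le_one (hnn : ∀ x, 0 ≤ μ x) (hprob : ∑ᶠ x, μ x = 1) (n : ℕ) (x : G) :
    convPow μ n x ≤ 1 := by
  have hfin : HasFiniteSupport μ := hasFiniteSupport_of_finsum_eq_one hprob
  induction n generalizing x with
  | zero => rw [convPow_zero_apply]; split_ifs <;> norm_num
  | succ n ih =>
    calc convPow μ (n + 1) x = ∑ᶠ y, convPow μ n y * μ (y⁻¹ * x) := convPow_succ_apply n x
      _ ≤ ∑ᶠ y, 1 * μ (y⁻¹ * x) :=
        finsum_le_finsum' (hasFiniteSupport_mul_comp_inv_mul hfin _ x)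
          (hasFiniteSupport_mul_comp_inv_mul hfin _ x)
          fun y => mul_le_mul_of_nonneg_right (ih y) (hnn _)
      _ = 1 := by simp_rw [one_mul, finsum_comp_inv_mul, hprob]

lemma abs_convPow_le_one (hnn : ∀ x, 0 ≤ μ x) (hprob : ∑ᶠ x, μ x = 1) (n : ℕ) (x : G) :
    |convPow μ n x| ≤ 1 := by
  rw [abs_of_nonneg (convPow_nonneg hnn n x)]
  exact convPow_le_one hnn hprob n x

lemma convPow_mul_convPow_inv_mul_le (hnn : ∀ x, 0 ≤ μ x) (hfin : HasFiniteSupport μ)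
    (m n : ℕ) (w z : G) : convPow μ m w * convPow μ n (w⁻¹ * z) ≤ convPow μ (m + n) z := by
  induction n generalizing z with
  | zero =>
    rw [convPow_zero_apply]
    split_ifs with h
    · rw [← inv_mul_eq_one.mp h, mul_one, add_zero]
    · rw [mul_zero]
      exact convPow_nonneg hnn _ z
  | succ n ih =>
    have hassoc : ∀ u, (w * u)⁻¹ * z = u⁻¹ * (w⁻¹ * z) := fun u => by group
    calc convPow μ m w * convPow μ (n + 1) (w⁻¹ * z)
        = ∑ᶠ u, convPow μ m w * convPow μ n u * μ (u⁻¹ * (w⁻¹ * z)) := by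
          rw [convPow_succ_apply, mul_finsum]
          simp_rw [mul_assoc]
      _ ≤ ∑ᶠ u, convPow μ (m + n) (w * u) * μ (u⁻¹ * (w⁻¹ * z)) :=
          finsum_le_finsum' (hasFiniteSupport_mul_comp_inv_mul hfin _ _)
            (hasFiniteSupport_mul_comp_inv_mul hfin _ _)
            fun u => mul_le_mul_of_nonneg_right (by simpa using ih (w * u)) (hnn _)
      _ = convPow μ (m + n + 1) z := by
          simp_rw [← hassoc]
          exact finsum_comp_equiv (Equiv.mulLeft w)
            (f := fun v => convPow μ (m + n) v * μ (v⁻¹ * z))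

lemma convPow_munorm_pos {x : G} (hx : ∃ n, 0 < convPow μ n x) : 0 < convPow μ (munorm μ x) x :=
  Nat.sInf_mem hx

lemma convPow_eq_zero_of_lt_munorm (hnn : ∀ x, 0 ≤ μ x) {n : ℕ} {x : G} (h : n < munorm μ x) :
    convPow μ n x = 0 :=
  le_antisymm (not_lt.mp (Nat.notMem_of_lt_sInf h)) (convPow_nonneg hnn n x)

lemma munorm_le_munorm_add_munorm_inv_mul (hnn : ∀ x, 0 ≤ μ x) (hfin : HasFiniteSupport μ)
    {x y : G} (hx : ∃ n, 0 < convPow μ n x) (hxy : ∃ n, 0 < convPow μ n (x⁻¹ * y)) :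
    munorm μ y ≤ munorm μ x + munorm μ (x⁻¹ * y) :=
  Nat.sInf_le <| (mul_pos (convPow_munorm_pos hx) (convPow_munorm_pos hxy)).trans_le
    (convPow_mul_convPow_inv_mul_le hnn hfin _ _ x y)

end ConvPow

section PowerSeries

variable {d : ℕ → ℝ} {C : ℝ}

lemma summable_pow_mul_of_abs_le (hd : ∀ n, |d n| ≤ C) {lam : ℝ} (hlam : |lam| < 1) :
    Summable fun n => lam ^ n * d n :=
  ((summable_geometric_of_lt_one (abs_nonneg lam) hlam).mul_right C).of_norm_bounded fun n => by
    rw [Real.norm_eq_abs, abs_mul, abs_pow]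
    exact mul_le_mul_of_nonneg_left (hd n) (by positivity)

lemma tendsto_tsum_pow_mul_nhds_zero (hd : ∀ n, |d n| ≤ C) :
    Tendsto (fun lam => ∑' n, lam ^ n * d n) (𝓝 0) (𝓝 (d 0)) := by
  have hterm (n : ℕ) : Tendsto (fun lam : ℝ => lam ^ n * d n) (𝓝 0) (𝓝 ((0 : ℝ) ^ n * d n)) :=
    ((continuous_pow n).tendsto 0).mul_const _
  have hbound : ∀ᶠ lam in 𝓝 (0 : ℝ), ∀ n, ‖lam ^ n * d n‖ ≤ (1 / 2) ^ n * C := by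
    filter_upwards [Metric.ball_mem_nhds (0 : ℝ) one_half_pos] with lam hlam n
    rw [Metric.mem_ball, dist_zero_right, Real.norm_eq_abs] at hlam
    rw [Real.norm_eq_abs, abs_mul, abs_pow]
    exact mul_le_mul (pow_le_pow_left₀ (abs_nonneg _) hlam.le n) (hd n) (abs_nonneg _)
      (by positivity)
  have hsum := tendsto_tsum_of_dominated_convergence (summable_geometric_two.mul_right C) hterm
    hbound
  rwa [tsum_eq_single 0 fun n hn => by rw [zero_pow hn, zero_mul], pow_zero, one_mul] at hsum

lemma tsum_pow_mul_eq_pow_mul_tsum_add {lam : ℝ} (hsum : Summable fun n => lam ^ n * d n)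
    {k : ℕ} (hzero : ∀ n < k, d n = 0) :
    ∑' n, lam ^ n * d n = lam ^ k * ∑' n, lam ^ n * d (n + k) := by
  rw [← hsum.sum_add_tsum_nat_add k, ← tsum_mul_left,
    Finset.sum_eq_zero fun n hn => by rw [hzero n (Finset.mem_range.mp hn), mul_zero], zero_add]
  exact tsum_congr fun n => by ring

end PowerSeries

section Green

variable {G : Type*} [Group G] {μ : G → ℝ}

/-- `G(e, g | λ) / λ ^ |g|_μ`, written as a power series so that it is meaningful at `λ = 0`. -/
noncomputable def normalizedGreen (μ : G → ℝ) (lam : ℝ) (g : G) : ℝ :=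
  ∑' n : ℕ, lam ^ n * convPow μ (n + munorm μ g) g

lemma lamGreen_eq_pow_mul_normalizedGreen (hnn : ∀ x, 0 ≤ μ x) (hprob : ∑ᶠ x, μ x = 1)
    {lam : ℝ} (hlam : |lam| < 1) (x y : G) :
    lamGreen μ lam x y = lam ^ munorm μ (x⁻¹ * y) * normalizedGreen μ lam (x⁻¹ * y) :=
  tsum_pow_mul_eq_pow_mul_tsum_add
    (summable_pow_mul_of_abs_le (abs_convPow_le_one hnn hprob · _) hlam)
    fun _ => convPow_eq_zero_of_lt_munorm hnn

lemma tendsto_normalizedGreen (hnn : ∀ x, 0 ≤ μ x) (hprob : ∑ᶠ x, μ x = 1) (g : G) :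
    Tendsto (normalizedGreen μ · g) (𝓝 0) (𝓝 (convPow μ (munorm μ g) g)) := by
  have := tendsto_tsum_pow_mul_nhds_zero fun n => abs_convPow_le_one hnn hprob (n + munorm μ g) g
  rwa [zero_add] at this

end Green

lemma pow_mul_div_pow_mul_eq {K : Type*} [Field K] {lam : K} (hlam : lam ≠ 0) {a b c : ℕ}
    (h : c ≤ a + b) (A B : K) :
    lam ^ a * (lam ^ b * A / (lam ^ c * B)) = lam ^ (a + b - c) * (A / B) := by
  rw [mul_div_mul_comm, ← mul_assoc, ← mul_div_assoc (lam ^ a), ← pow_add, pow_sub₀ _ hlam h,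
    div_eq_mul_inv]

theorem rescaled_martin_kernel_tendsto_zero_kernel_general
    {G : Type*} [Group G] (μ : G → ℝ)
    (hnn : ∀ x, 0 ≤ μ x) (hprob : ∑ᶠ x, μ x = 1)
    (hadm : ∀ x : G, ∃ n, 0 < convPow μ n x) (x y : G) :
    Tendsto (fun lam : ℝ =>
        lam ^ (munorm μ x) * (lamGreen μ lam x y / lamGreen μ lam 1 y))
      (nhdsWithin 0 (Set.Ioi 0))
      (nhds (if munorm μ y = munorm μ x + munorm μ (x⁻¹ * y) then
          convPow μ (munorm μ y - munorm μ x) (x⁻¹ * y) / convPow μ (munorm μ y) y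
        else 0)) := by
  have htri := munorm_le_munorm_add_munorm_inv_mul hnn (hasFiniteSupport_of_finsum_eq_one hprob)
    (hadm x) (hadm (x⁻¹ * y))
  set a := munorm μ x
  set b := munorm μ (x⁻¹ * y)
  set c := munorm μ y
  have hkernel : (fun lam : ℝ => lam ^ a * (lamGreen μ lam x y / lamGreen μ lam 1 y))
      =ᶠ[𝓝[>] 0] fun lam =>
        lam ^ (a + b - c) * (normalizedGreen μ lam (x⁻¹ * y) / normalizedGreen μ lam y) := by
    filter_upwards [Ioo_mem_nhdsGT one_pos] with lam hlam
    have hlam1 : |lam| < 1 := abs_lt.2 ⟨by linarith [hlam.1], hlam.2⟩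
    rw [lamGreen_eq_pow_mul_normalizedGreen hnn hprob hlam1,
      lamGreen_eq_pow_mul_normalizedGreen hnn hprob hlam1, inv_one, one_mul]
    exact pow_mul_div_pow_mul_eq hlam.1.ne' htri _ _
  have hvalue : (if c = a + b then convPow μ (c - a) (x⁻¹ * y) / convPow μ c y else 0) =
      0 ^ (a + b - c) * (convPow μ b (x⁻¹ * y) / convPow μ c y) := by
    rw [zero_pow_eq]
    by_cases hgeod : c = a + b
    · simp [hgeod]
    · simp [hgeod, show a + b - c ≠ 0 by omega]
  rw [hvalue]
  refine Tendsto.congr' hkernel.symm (Tendsto.mono_left ?_ nhdsWithin_le_nhds)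
  exact ((continuous_pow _).tendsto 0).mul ((tendsto_normalizedGreen hnn hprob _).div
    (tendsto_normalizedGreen hnn hprob y) (convPow_munorm_pos (hadm y)).ne')

theorem rescaled_martin_kernel_tendsto_zero_kernel
    {G : Type*} [Group G] [Countable G] (μ : G → ℝ)
    (hnn : ∀ x, 0 ≤ μ x) (hprob : ∑ᶠ x, μ x = 1)
    (hfin : (Function.support μ).Finite)
    (hadm : ∀ x : G, ∃ n, 0 < convPow μ n x) (x y : G) :
    Tendsto (fun lam : ℝ =>
        lam ^ (munorm μ x) * (lamGreen μ lam x y / lamGreen μ lam 1 y))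
      (nhdsWithin 0 (Set.Ioi 0))
      (nhds (if munorm μ y = munorm μ x + munorm μ (x⁻¹ * y) then
          convPow μ (munorm μ y - munorm μ x) (x⁻¹ * y) / convPow μ (munorm μ y) y
        else 0)) :=
  rescaled_martin_kernel_tendsto_zero_kernel_general μ hnn hprob hadm x y
end

section
/- For the group Γ = F_2 × ℤ/2ℤ with the lazy measure μ = α δ_{(e,0)} + ((1−α)/6)(δ_{(a,0)} + δ_{(a^{-1},0)} + δ_{(b,0)} + δ_{(b^{-1},0)} + δ_{(a,1)} + δ_{(a^{-1},1)}), 0 < α < 1: for every n ≥ 0 there is a unique word geodesic (with respect to the generating set S = supp(μ)\{(e,0)}) from (e,0) to (ab^n, 0), a unique geodesic from (e,0) to (ab^n, 1), and exactly two geodesics from (e,0) to (ab^n a, 1); in particular |(ab^n,0)|_μ = |(ab^n,1)|_μ = n+1 and |(ab^n a,1)|_μ = n+2. -/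
open scoped Classical

/-- The group Γ = F₂ × ℤ/2ℤ. -/
abbrev Gamma2 : Type := FreeGroup (Fin 2) × Multiplicative (ZMod 2)

def ga : FreeGroup (Fin 2) := FreeGroup.of 0
def gb : FreeGroup (Fin 2) := FreeGroup.of 1
def z0 : Multiplicative (ZMod 2) := Multiplicative.ofAdd 0
def z1 : Multiplicative (ZMod 2) := Multiplicative.ofAdd 1

/-- The generating set `S = {(a,0),(b,0),(a⁻¹,0),(b⁻¹,0),(a,1),(a⁻¹,1)}`. -/
def Sgen : Set Gamma2 :=
  {(ga, z0), (gb, z0), (ga⁻¹, z0), (gb⁻¹, z0), (ga, z1), (ga⁻¹, z1)}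

/-- Word length with respect to the generating set `S`. -/
noncomputable def wl (x : Gamma2) : ℕ :=
  sInf {n | ∃ l : List Gamma2, l.length = n ∧ (∀ s ∈ l, s ∈ Sgen) ∧ l.prod = x}

/-- A geodesic word from the identity to `v`: a word in the generators of minimal
length representing `v`. -/
def IsGeodesicWord (v : Gamma2) (l : List Gamma2) : Prop :=
  (∀ s ∈ l, s ∈ Sgen) ∧ l.prod = v ∧ l.length = wl v

/-!
Projecting to `F₂`, every generator in `S` becomes a single letter `a^±1` or `b^±1`. Hence a word
of length `k` in `S` represents an element whose reduced `F₂`-word has length at most `k`, with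
equality exactly when the projected letters already spell that reduced word. The words `abⁿ` and
`abⁿa` are reduced and can be realised in `S` with either `ℤ/2` component, so they give the word
lengths, and every geodesic projects letter by letter onto them. The only lift of `b` is `(b,0)`
while `a` lifts to `(a,0)` and `(a,1)`: the `ℤ/2` coordinate pins down the single `a` of `abⁿ` and
leaves two choices for the two `a`s of `abⁿa`.
-/

namespace FreeGroup

variable {α : Type*}

theorem isReduced_of_forall_snd_eq {L : List (α × Bool)} (b : Bool) (h : ∀ p ∈ L, p.2 = b) :
    IsReduced L := by
  unfold IsReduced
  exact (List.pairwise_of_forall_mem_list (r := fun p q : α × Bool => p.1 = q.1 → p.2 = q.2)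
    fun p hp q hq _ => (h p hp).trans (h q hq).symm).isChain

theorem prod_map_mk_singleton (L : List (α × Bool)) : (L.map fun p => mk [p]).prod = mk L := by
  induction L with
  | nil => rfl
  | cons p L ih => rw [List.map_cons, List.prod_cons, ih, mul_mk, List.singleton_append]

theorem exists_map_mk_singleton_eq {xs : List (FreeGroup α)} (h : ∀ x ∈ xs, ∃ p, mk [p] = x) :
    ∃ L : List (α × Bool), L.map (fun p => mk [p]) = xs := by
  induction xs with
  | nil => exact ⟨[], rfl⟩
  | cons x xs ih =>
    obtain ⟨p, hp⟩ := h x List.mem_cons_self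
    obtain ⟨L, hL⟩ := ih fun y hy => h y (List.mem_cons_of_mem x hy)
    exact ⟨p :: L, by rw [List.map_cons, hp, hL]⟩

variable [DecidableEq α]

theorem reduce_eq_self_of_length_eq {L : List (α × Bool)} (h : (reduce L).length = L.length) :
    reduce L = L :=
  reduce.red.sublist.eq_of_length h

theorem norm_prod_le_length {xs : List (FreeGroup α)} (h : ∀ x ∈ xs, ∃ p, mk [p] = x) :
    norm xs.prod ≤ xs.length := by
  obtain ⟨L, rfl⟩ := exists_map_mk_singleton_eq h
  rw [prod_map_mk_singleton, List.length_map]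
  exact norm_mk_le

theorem eq_map_toWord_of_norm_prod_eq {xs : List (FreeGroup α)}
    (h : ∀ x ∈ xs, ∃ p, mk [p] = x) (hn : norm xs.prod = xs.length) :
    xs = xs.prod.toWord.map fun p => mk [p] := by
  obtain ⟨L, rfl⟩ := exists_map_mk_singleton_eq h
  rw [prod_map_mk_singleton, norm, toWord_mk, List.length_map] at *
  rw [reduce_eq_self_of_length_eq hn]

end FreeGroup

theorem Prod.fst_list_prod {M N : Type*} [Monoid M] [Monoid N] (l : List (M × N)) :
    l.prod.1 = (l.map Prod.fst).prod :=
  map_list_prod (MonoidHom.fst M N) l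

open FreeGroup

lemma exists_mk_singleton_eq_fst {s : Gamma2} (hs : s ∈ Sgen) : ∃ p, mk [p] = s.1 := by
  simp only [Sgen, Set.mem_insert_iff, Set.mem_singleton_iff] at hs
  rcases hs with rfl | rfl | rfl | rfl | rfl | rfl
  · exact ⟨(0, true), rfl⟩
  · exact ⟨(1, true), rfl⟩
  · exact ⟨(0, false), (inv_mk (L := [(0, true)])).symm⟩
  · exact ⟨(1, false), (inv_mk (L := [(1, true)])).symm⟩
  · exact ⟨(0, true), rfl⟩
  · exact ⟨(0, false), (inv_mk (L := [(0, true)])).symm⟩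

lemma eq_gb_z0_of_fst_eq {s : Gamma2} (hs : s ∈ Sgen) (h : s.1 = gb) : s = (gb, z0) := by
  simp only [Sgen, Set.mem_insert_iff, Set.mem_singleton_iff] at hs
  rcases hs with rfl | rfl | rfl | rfl | rfl | rfl <;> first | rfl | exact absurd h (by decide)

lemma ga_mem_Sgen (c : Multiplicative (ZMod 2)) : (ga, c) ∈ Sgen := by
  obtain rfl | rfl : c = z0 ∨ c = z1 := by revert c; decide
  all_goals simp [Sgen]

lemma gb_z0_mem_Sgen : (gb, z0) ∈ Sgen := by simp [Sgen]

section Words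

variable {l : List Gamma2}

lemma forall_mem_map_fst_exists_mk_singleton (hl : ∀ s ∈ l, s ∈ Sgen) :
    ∀ x ∈ l.map Prod.fst, ∃ p, mk [p] = x := by
  simpa only [List.forall_mem_map] using fun s hs => exists_mk_singleton_eq_fst (hl s hs)

lemma norm_fst_prod_le_length (hl : ∀ s ∈ l, s ∈ Sgen) : norm l.prod.1 ≤ l.length := by
  rw [Prod.fst_list_prod, ← l.length_map Prod.fst]
  exact norm_prod_le_length (forall_mem_map_fst_exists_mk_singleton hl)

lemma map_fst_eq_of_length_eq_norm (hl : ∀ s ∈ l, s ∈ Sgen) (hn : l.length = norm l.prod.1) :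
    l.map Prod.fst = l.prod.1.toWord.map fun p => mk [p] := by
  rw [Prod.fst_list_prod] at hn ⊢
  exact eq_map_toWord_of_norm_prod_eq (forall_mem_map_fst_exists_mk_singleton hl)
    (by rw [← hn, List.length_map])

lemma wl_eq_norm (hl : ∀ s ∈ l, s ∈ Sgen) (hn : l.length = norm l.prod.1) :
    wl l.prod = norm l.prod.1 := by
  refine le_antisymm (Nat.sInf_le ⟨l, hn, hl, rfl⟩) (le_csInf ⟨_, l, hn, hl, rfl⟩ ?_)
  rintro k ⟨l', rfl, hl', hp⟩
  rw [← hp]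
  exact norm_fst_prod_le_length hl'

lemma eq_replicate_of_map_fst_eq {n : ℕ} (hl : ∀ s ∈ l, s ∈ Sgen)
    (h : l.map Prod.fst = List.replicate n gb) : l = List.replicate n (gb, z0) := by
  refine List.eq_replicate_iff.2 ⟨by simpa using congrArg List.length h, fun s hs => ?_⟩
  have : s.1 ∈ List.replicate n gb := h ▸ List.mem_map_of_mem hs
  exact eq_gb_z0_of_fst_eq (hl s hs) (List.eq_of_mem_replicate this)

end Words

theorem toWord_ga_mul_gb_pow (n : ℕ) :
    (ga * gb ^ n).toWord = (0, true) :: List.replicate n (1, true) := by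
  have : ga * gb ^ n = mk ((0, true) :: List.replicate n (1, true)) := by
    rw [← prod_map_mk_singleton, List.map_cons, List.map_replicate, List.prod_cons,
      List.prod_replicate]
    rfl
  rw [this, toWord_mk, (isReduced_of_forall_snd_eq true (by simp)).reduce_eq]

theorem toWord_ga_mul_gb_pow_mul_ga (n : ℕ) :
    (ga * gb ^ n * ga).toWord = (0, true) :: List.replicate n (1, true) ++ [(0, true)] := by
  have : ga * gb ^ n * ga = mk ((0, true) :: List.replicate n (1, true) ++ [(0, true)]) := by
    rw [← prod_map_mk_singleton, List.map_append, List.map_cons, List.map_replicate,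
      List.prod_append, List.prod_cons, List.prod_replicate, List.map_singleton,
      List.prod_singleton]
    rfl
  rw [this, toWord_mk, (isReduced_of_forall_snd_eq true (by simp)).reduce_eq]

section Geodesics

variable (n : ℕ) (c d : Multiplicative (ZMod 2))

def abWord : List Gamma2 := (ga, c) :: List.replicate n (gb, z0)

def abaWord : List Gamma2 := (ga, c) :: List.replicate n (gb, z0) ++ [(ga, d)]

lemma abWord_mem_Sgen : ∀ s ∈ abWord n c, s ∈ Sgen := by
  simp only [abWord, List.mem_cons, List.mem_replicate]
  rintro s (rfl | ⟨-, rfl⟩)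
  exacts [ga_mem_Sgen c, gb_z0_mem_Sgen]

lemma abaWord_mem_Sgen : ∀ s ∈ abaWord n c d, s ∈ Sgen := by
  simp only [abaWord, List.cons_append, List.mem_cons, List.mem_append, List.mem_replicate,
    List.not_mem_nil, or_false]
  rintro s (rfl | ⟨-, rfl⟩ | rfl)
  exacts [ga_mem_Sgen c, gb_z0_mem_Sgen, ga_mem_Sgen d]

lemma prod_abWord : (abWord n c).prod = (ga * gb ^ n, c) := by
  simp [abWord, List.prod_replicate, z0]

lemma prod_abaWord : (abaWord n c d).prod = (ga * gb ^ n * ga, c * d) := by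
  simp [abaWord, List.prod_replicate, z0, mul_assoc]

lemma norm_ga_mul_gb_pow : norm (ga * gb ^ n) = n + 1 := by
  simp [FreeGroup.norm, toWord_ga_mul_gb_pow]

lemma norm_ga_mul_gb_pow_mul_ga : norm (ga * gb ^ n * ga) = n + 2 := by
  simp [FreeGroup.norm, toWord_ga_mul_gb_pow_mul_ga]

lemma wl_ga_mul_gb_pow : wl (ga * gb ^ n, c) = n + 1 := by
  have := wl_eq_norm (abWord_mem_Sgen n c)
    (by rw [prod_abWord, norm_ga_mul_gb_pow]; simp [abWord])
  rwa [prod_abWord, norm_ga_mul_gb_pow] at this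

lemma wl_ga_mul_gb_pow_mul_ga : wl (ga * gb ^ n * ga, c) = n + 2 := by
  have := wl_eq_norm (abaWord_mem_Sgen n 1 c)
    (by rw [prod_abaWord, norm_ga_mul_gb_pow_mul_ga]; simp [abaWord])
  rwa [prod_abaWord, one_mul, norm_ga_mul_gb_pow_mul_ga] at this

variable {n c}

lemma isGeodesicWord_ga_mul_gb_pow_iff {l : List Gamma2} :
    IsGeodesicWord (ga * gb ^ n, c) l ↔ l = abWord n c := by
  refine ⟨fun ⟨hl, hp, hn⟩ => ?_, ?_⟩
  · have hfst := map_fst_eq_of_length_eq_norm hl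
      (by rw [hn, hp, wl_ga_mul_gb_pow, norm_ga_mul_gb_pow])
    rw [hp, toWord_ga_mul_gb_pow, List.map_cons, List.map_replicate] at hfst
    obtain ⟨s, l', rfl, hs, hl'⟩ := List.map_eq_cons_iff.1 hfst
    have hl : s :: l' = abWord n s.2 := by
      rw [abWord, eq_replicate_of_map_fst_eq (fun t ht => hl t (List.mem_cons_of_mem s ht)) hl',
        show s = (ga, s.2) from Prod.ext hs rfl]
    rw [hl, prod_abWord, Prod.mk.injEq] at hp
    rw [hl, hp.2]
  · rintro rfl
    exact ⟨abWord_mem_Sgen n c, prod_abWord n c, by simp [abWord, wl_ga_mul_gb_pow]⟩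

lemma isGeodesicWord_ga_mul_gb_pow_mul_ga_iff {l : List Gamma2} :
    IsGeodesicWord (ga * gb ^ n * ga, c) l ↔ ∃ c₁ c₂, c₁ * c₂ = c ∧ l = abaWord n c₁ c₂ := by
  refine ⟨fun ⟨hl, hp, hn⟩ => ?_, ?_⟩
  · have hfst := map_fst_eq_of_length_eq_norm hl
      (by rw [hn, hp, wl_ga_mul_gb_pow_mul_ga, norm_ga_mul_gb_pow_mul_ga])
    rw [hp, toWord_ga_mul_gb_pow_mul_ga, List.map_append, List.map_cons, List.map_replicate]
      at hfst
    obtain ⟨l₁, l₂, rfl, h₁, h₂⟩ := List.map_eq_append_iff.1 hfst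
    obtain ⟨s, l', rfl, hs, hl'⟩ := List.map_eq_cons_iff.1 h₁
    obtain ⟨t, rfl, ht⟩ := List.map_eq_singleton_iff.1 h₂
    have hl : s :: l' ++ [t] = abaWord n s.2 t.2 := by
      rw [abaWord, eq_replicate_of_map_fst_eq (fun u hu => hl u (by simp [hu])) hl',
        show s = (ga, s.2) from Prod.ext hs rfl, show t = (ga, t.2) from Prod.ext ht rfl]
    rw [hl, prod_abaWord, Prod.mk.injEq] at hp
    exact ⟨s.2, t.2, hp.2, hl⟩
  · rintro ⟨c₁, c₂, rfl, rfl⟩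
    exact ⟨abaWord_mem_Sgen n c₁ c₂, prod_abaWord n c₁ c₂,
      by simp [abaWord, wl_ga_mul_gb_pow_mul_ga]⟩

end Geodesics

theorem geodesics_in_F2_times_Z2 :
    ∀ n : ℕ,
      (∃! l : List Gamma2, IsGeodesicWord (ga * gb ^ n, z0) l) ∧
      (∃! l : List Gamma2, IsGeodesicWord (ga * gb ^ n, z1) l) ∧
      (∃ l₁ l₂ : List Gamma2, l₁ ≠ l₂ ∧
        IsGeodesicWord (ga * gb ^ n * ga, z1) l₁ ∧
        IsGeodesicWord (ga * gb ^ n * ga, z1) l₂ ∧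
        ∀ l : List Gamma2, IsGeodesicWord (ga * gb ^ n * ga, z1) l → l = l₁ ∨ l = l₂) ∧
      wl (ga * gb ^ n, z0) = n + 1 ∧
      wl (ga * gb ^ n, z1) = n + 1 ∧
      wl (ga * gb ^ n * ga, z1) = n + 2 := by
  intro n
  have unique_geodesic (c) : ∃! l, IsGeodesicWord (ga * gb ^ n, c) l :=
    ⟨abWord n c, isGeodesicWord_ga_mul_gb_pow_iff.2 rfl,
      fun _ => isGeodesicWord_ga_mul_gb_pow_iff.1⟩
  have two_geodesics (c₁ c₂) (h : c₁ * c₂ = z1) :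
      IsGeodesicWord (ga * gb ^ n * ga, z1) (abaWord n c₁ c₂) :=
    isGeodesicWord_ga_mul_gb_pow_mul_ga_iff.2 ⟨c₁, c₂, h, rfl⟩
  refine ⟨unique_geodesic z0, unique_geodesic z1,
    ⟨abaWord n z0 z1, abaWord n z1 z0, by simp [abaWord, z0, z1], two_geodesics _ _ rfl,
      two_geodesics _ _ rfl, fun l hl => ?_⟩,
    wl_ga_mul_gb_pow n z0, wl_ga_mul_gb_pow n z1, wl_ga_mul_gb_pow_mul_ga n z1⟩
  obtain ⟨c₁, c₂, hc, rfl⟩ := isGeodesicWord_ga_mul_gb_pow_mul_ga_iff.1 hl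
  obtain ⟨rfl, rfl⟩ | ⟨rfl, rfl⟩ : c₁ = z0 ∧ c₂ = z1 ∨ c₁ = z1 ∧ c₂ = z0 := by
    clear hl; revert c₁ c₂; decide
  exacts [Or.inl rfl, Or.inr rfl]
end

section
/- Suppose the strong ratio-limit property holds and additionally lim_k P^{k+1}(x,y)/P^k(x,y) = R^{-1} for all x,y (Gerl's theorem). Then for every y ∈ Γ, every m ∈ ℕ and every x with (x,m) ∈ ST, and every sequence n_k → ∞ with (y,n_k) ∈ ST, one has P^{n_k − m}(x,y)/P^{n_k}(e,y) → R^m · H(x,y) as k → ∞. -/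
open Filter Topology
open scoped Classical

/-! Gerl's ratio limit gives `P^{n-m}/P^n → R^m` by telescoping `m` one-step ratios; multiplying
by the strong ratio limit `P^n(x,y)/P^n(e,y) → H(x,y)` along `n = n_k` gives the theorem. -/

section RatioLimit

variable {K : Type*} [Field K] [TopologicalSpace K] [T1Space K] {g : ℕ → K} {c : K}

/-- With the convention `a / 0 = 0`, a nonzero limit of the ratios forces `g k ≠ 0`. -/
theorem eventually_ne_zero_of_tendsto_div_succ
    (hg : Tendsto (fun k => g (k + 1) / g k) atTop (𝓝 c)) (hc : c ≠ 0) :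
    ∀ᶠ k in atTop, g k ≠ 0 := by
  filter_upwards [hg.eventually_ne hc] with k hk hgk
  exact hk (by rw [hgk, div_zero])

theorem tendsto_div_sub_of_tendsto_div_succ [IsTopologicalDivisionRing K]
    (hg : Tendsto (fun k => g (k + 1) / g k) atTop (𝓝 c)) (hc : c ≠ 0) (m : ℕ) :
    Tendsto (fun n => g (n - m) / g n) atTop (𝓝 (c⁻¹ ^ m)) := by
  have hne := eventually_ne_zero_of_tendsto_div_succ hg hc
  induction m with
  | zero =>
    refine tendsto_const_nhds.congr' ?_
    filter_upwards [hne] with n hn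
    rw [Nat.sub_zero, pow_zero, div_self hn]
  | succ m ih =>
    have hback : Tendsto (fun n => g (n - (m + 1)) / g (n - m)) atTop (𝓝 c⁻¹) := by
      refine ((hg.inv₀ hc).comp (tendsto_sub_atTop_nat (m + 1))).congr' ?_
      filter_upwards [eventually_ge_atTop (m + 1)] with n hn
      rw [Function.comp_apply, inv_div, show n - (m + 1) + 1 = n - m by omega]
    rw [pow_succ']
    refine (hback.mul ih).congr' ?_
    filter_upwards [(tendsto_sub_atTop_nat m).eventually hne] with n hn
    exact div_mul_div_cancel₀ hn

end RatioLimit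

theorem spaceTime_kernel_limit_along_time_general
    {G : Type*} [Group G] (μ : G → ℝ)
    (R : ℝ) (hR : 0 < R) (H : G → G → ℝ)
    -- strong ratio-limit property
    (hsrlp : ∀ x y : G,
      Tendsto (fun n => convPow μ n (x⁻¹ * y) / convPow μ n y) atTop (nhds (H x y)))
    -- Gerl's ratio limit theorem
    (hgerl : ∀ x y : G,
      Tendsto (fun k => convPow μ (k + 1) (x⁻¹ * y) / convPow μ k (x⁻¹ * y))
        atTop (nhds R⁻¹)) :
    ∀ (y : G) (m : ℕ) (x : G), 0 < convPow μ m x →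
      ∀ nk : ℕ → ℕ, Tendsto nk atTop atTop → (∀ k, 0 < convPow μ (nk k) y) →
        Tendsto (fun k => convPow μ (nk k - m) (x⁻¹ * y) / convPow μ (nk k) y)
          atTop (nhds (R ^ m * H x y)) := by
  intro y m x _ nk hnk _
  have hRinv : R⁻¹ ≠ 0 := inv_ne_zero hR.ne'
  set P : ℕ → ℝ := fun n => convPow μ n (x⁻¹ * y)
  have hshift : Tendsto (fun n => P (n - m) / P n) atTop (𝓝 (R ^ m)) := by
    simpa only [inv_inv] using tendsto_div_sub_of_tendsto_div_succ (g := P) (hgerl x y) hRinv m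
  have hP_ne : ∀ᶠ n in atTop, P n ≠ 0 :=
    eventually_ne_zero_of_tendsto_div_succ (g := P) (hgerl x y) hRinv
  refine ((hshift.comp hnk).mul ((hsrlp x y).comp hnk)).congr' ?_
  filter_upwards [hnk.eventually hP_ne] with k hk
  exact div_mul_div_cancel₀ hk

theorem spaceTime_kernel_limit_along_time
    {G : Type*} [Group G] [Countable G] (μ : G → ℝ)
    (hnn : ∀ x, 0 ≤ μ x) (hprob : ∑ᶠ x, μ x = 1)
    (hadm : ∀ x : G, ∃ n, 0 < convPow μ n x)
    (R : ℝ) (hR : 0 < R) (H : G → G → ℝ)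
    -- strong ratio-limit property
    (hsrlp : ∀ x y : G,
      Tendsto (fun n => convPow μ n (x⁻¹ * y) / convPow μ n y) atTop (nhds (H x y)))
    -- eventual positivity of the transition probabilities
    (hposev : ∀ x y : G, ∃ N : ℕ, ∀ k ≥ N, 0 < convPow μ k (x⁻¹ * y))
    -- Gerl's ratio limit theorem
    (hgerl : ∀ x y : G,
      Tendsto (fun k => convPow μ (k + 1) (x⁻¹ * y) / convPow μ k (x⁻¹ * y))
        atTop (nhds R⁻¹)) :
    ∀ (y : G) (m : ℕ) (x : G), 0 < convPow μ m x →
      ∀ nk : ℕ → ℕ, Tendsto nk atTop atTop → (∀ k, 0 < convPow μ (nk k) y) →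
        Tendsto (fun k => convPow μ (nk k - m) (x⁻¹ * y) / convPow μ (nk k) y)
          atTop (nhds (R ^ m * H x y)) :=
  spaceTime_kernel_limit_along_time_general μ R hR H hsrlp hgerl
end
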